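/- arXiv:2410.10224 — 2 statements merged into one kernel-verified Lean document; each statement's English description precedes it below -/
import Mathlib

section
/- Let F be a field, let P be a nonzero polynomial over F, and let d, t be natural numbers with natDegree P ≤ d. Then the rank of the Toeplitz matrix M_{P,t}, viewed as a (d+t+1)×(t+1) matrix over F, equals t + 1 (i.e., M_{P,t} has full column rank). -/
/-!
Reading `v : Fin (t + 1) → R` as the coefficients of a polynomial `Q` of degree `≤ t`, the
vector `toeplitz P d t *ᵥ v` lists the coefficients of `P * Q` in degrees `≤ d + t`, which are
all of them. So `toeplitz P d t *ᵥ v = 0` forces `P * Q = 0`, hence `Q = 0` when `P` is a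
non-zero-divisor: the columns are linearly independent.
-/

/-- The Toeplitz matrix of a polynomial `P`, of size `(d+t+1) × (t+1)`:
`M(i,j) = coeff P (i - j)` if `j ≤ i`, and `0` otherwise. -/
def toeplitz {R : Type*} [CommRing R] (P : Polynomial R) (d t : ℕ) :
    Matrix (Fin (d + t + 1)) (Fin (t + 1)) R :=
  fun i j => if (j : ℕ) ≤ (i : ℕ) then P.coeff ((i : ℕ) - (j : ℕ)) else 0

open Polynomial Matrix

section

variable {R : Type*} [CommRing R] (P : R[X]) (d t : ℕ)

theorem toeplitz_apply_eq_coeff_mul_X_pow (i : Fin (d + t + 1)) (j : Fin (t + 1)) :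
    toeplitz P d t i j = (P * X ^ (j : ℕ)).coeff i :=
  (coeff_mul_X_pow' P j i).symm

theorem toeplitz_mulVec_apply [DecidableEq R] (v : Fin (t + 1) → R) (i : Fin (d + t + 1)) :
    (toeplitz P d t *ᵥ v) i = (P * ofFn (t + 1) v).coeff i := by
  simp only [mulVec, dotProduct, toeplitz_apply_eq_coeff_mul_X_pow, ofFn_eq_sum_monomial,
    Finset.mul_sum, finsetSum_coeff, ← C_mul_X_pow_eq_monomial, mul_left_comm P, coeff_C_mul,
    mul_comm (v _)]

theorem toeplitz_mulVec_injective (hP : P ∈ nonZeroDivisors R[X]) (hPd : P.natDegree ≤ d) :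
    Function.Injective (toeplitz P d t).mulVec := by
  classical
  suffices h : ∀ v, toeplitz P d t *ᵥ v = 0 → v = 0 from fun v w hvw =>
    sub_eq_zero.1 (h _ (by rw [mulVec_sub, hvw, sub_self]))
  intro v hv
  have hdeg : (P * ofFn (t + 1) v).natDegree ≤ d + t :=
    natDegree_mul_le.trans
      (add_le_add hPd (Nat.lt_succ_iff.1 (ofFn_natDegree_lt t.succ_pos v)))
  have hPQ : P * ofFn (t + 1) v = 0 := by
    ext n
    rw [coeff_zero]
    by_cases hn : n < d + t + 1
    · simpa [hv] using (toeplitz_mulVec_apply P d t v ⟨n, hn⟩).symm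
    · exact coeff_eq_zero_of_natDegree_lt (by omega)
  have hQ : ofFn (t + 1) v = 0 := (mul_left_mem_nonZeroDivisors_eq_zero_iff hP).1 hPQ
  exact injective_ofFn _ (hQ.trans (map_zero _).symm)

end

theorem toeplitz_rank_eq {F : Type*} [Field F]
    (P : Polynomial F) (d t : ℕ) (hP : P ≠ 0) (hPd : P.natDegree ≤ d) :
    (toeplitz P d t).rank = t + 1 := by
  have hcols : LinearIndependent F (toeplitz P d t).col :=
    mulVec_injective_iff.1
      (toeplitz_mulVec_injective P d t (mem_nonZeroDivisors_of_ne_zero hP) hPd)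
  rw [rank_eq_finrank_span_cols, finrank_span_eq_card hcols, Fintype.card_fin]
end

section
/- Let P be a nonzero polynomial over the field F₂ (ZMod 2) with natDegree P = d, let t, w be natural numbers, and set n = d + t + 1. Then there exists a nonzero polynomial K with P ∣ K, natDegree K < n, and Hamming weight of K at most w if and only if there exists a nonzero vector q : Fin (t+1) → F₂ such that the number of indices i ∈ Fin n with (M_{P,t} · q) i ≠ 0 (the number of violated constraints of the affine system M_{P,t}·x = 0 under the assignment q) is at most w. -/
open Polynomial

namespace Polynomial

theorem mem_degreeLT_succ_iff_natDegree_le {R : Type*} [Semiring R] {f : R[X]} {n : ℕ} :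
    f ∈ degreeLT R (n + 1) ↔ f.natDegree ≤ n := by
  rw [degreeLT_succ_eq_degreeLE, mem_degreeLE, natDegree_le_iff_degree_le]

theorem card_support_eq_card_filter_coeff_ne_zero {R : Type*} [Semiring R] [DecidableEq R]
    {K : R[X]} {n : ℕ} (hK : K.natDegree < n) :
    K.support.card = (Finset.univ.filter fun i : Fin n => K.coeff i ≠ 0).card := by
  refine Finset.card_bij (fun i hi => ⟨i, (le_natDegree_of_mem_supp i hi).trans_lt hK⟩)
    (fun i hi => by simpa using hi) (fun _ _ _ _ h => congrArg Fin.val h) fun i hi => ?_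
  exact ⟨i, by simpa using hi, rfl⟩

theorem exists_dvd_natDegree_lt_iff {R : Type*} [CommRing R] [NoZeroDivisors R] {P : R[X]}
    (hP : P ≠ 0) (t : ℕ) (p : R[X] → Prop) :
    (∃ K, K ≠ 0 ∧ P ∣ K ∧ K.natDegree < P.natDegree + t + 1 ∧ p K) ↔
      ∃ Q : degreeLT R (t + 1), Q ≠ 0 ∧ p (P * Q) := by
  constructor
  · rintro ⟨K, hK, ⟨Q, rfl⟩, hdeg, hpK⟩
    have hQ : Q ≠ 0 := right_ne_zero_of_mul hK
    rw [natDegree_mul hP hQ] at hdeg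
    exact ⟨⟨Q, mem_degreeLT_succ_iff_natDegree_le.2 (by omega)⟩, by simpa using hQ, hpK⟩
  · rintro ⟨⟨Q, hQt⟩, hQ, hpQ⟩
    have hQt := mem_degreeLT_succ_iff_natDegree_le.1 hQt
    refine ⟨P * Q, mul_ne_zero hP (by simpa using hQ), dvd_mul_right P Q, ?_, hpQ⟩
    exact natDegree_mul_le.trans_lt (by omega)

end Polynomial

section
variable {R : Type*} [CommRing R]

theorem toeplitz_mulVec_degreeLTEquiv (P : R[X]) (d t : ℕ) (Q : degreeLT R (t + 1))
    (i : Fin (d + t + 1)) :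
    (toeplitz P d t).mulVec (degreeLTEquiv R (t + 1) Q) i = (P * Q).coeff i := by
  conv_rhs => rw [← (degreeLTEquiv R (t + 1)).symm_apply_apply Q]
  simp only [Matrix.mulVec, dotProduct, degreeLTEquiv, LinearEquiv.coe_symm_mk', Finset.mul_sum,
    finsetSum_coeff, ← C_mul_X_pow_eq_monomial]
  refine Finset.sum_congr rfl fun j _ => ?_
  rw [← mul_assoc, coeff_mul_X_pow', coeff_mul_C, toeplitz, ite_mul, zero_mul]

theorem card_toeplitz_mulVec_ne_zero [DecidableEq R] {P : R[X]} {d : ℕ} (hP : P.natDegree ≤ d)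
    (t : ℕ) (Q : degreeLT R (t + 1)) :
    (Finset.univ.filter fun i => (toeplitz P d t).mulVec (degreeLTEquiv R (t + 1) Q) i ≠ 0).card =
      (P * Q).support.card := by
  have hQ := mem_degreeLT_succ_iff_natDegree_le.1 Q.2
  rw [card_support_eq_card_filter_coeff_ne_zero (n := d + t + 1)
    (natDegree_mul_le.trans_lt (by omega))]
  simp only [toeplitz_mulVec_degreeLTEquiv]

end

theorem exists_low_weight_multiple_iff
    (P : Polynomial (ZMod 2)) (d t w : ℕ) (hP : P ≠ 0) (hPd : P.natDegree = d) :
    (∃ K : Polynomial (ZMod 2), K ≠ 0 ∧ P ∣ K ∧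
        K.natDegree < d + t + 1 ∧ K.support.card ≤ w) ↔
      (∃ q : Fin (t + 1) → ZMod 2, q ≠ 0 ∧
        (Finset.univ.filter fun i : Fin (d + t + 1) =>
          (toeplitz P d t).mulVec q i ≠ 0).card ≤ w) := by
  subst hPd
  rw [exists_dvd_natDegree_lt_iff hP t (fun K => K.support.card ≤ w),
    (degreeLTEquiv (ZMod 2) (t + 1)).surjective.exists]
  refine exists_congr fun Q => and_congr ?_ ?_
  · exact (degreeLTEquiv (ZMod 2) (t + 1)).map_ne_zero_iff.symm
  · rw [card_toeplitz_mulVec_ne_zero le_rfl t]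
end
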